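/- arXiv:2001.00715 — 3 statements merged into one kernel-verified Lean document; each statement's English description precedes it below -/
import Mathlib

section
/- Let N ≥ 2 and let L ∈ ℝ^{N×N} satisfy L·1_N = 0, 1_Nᵀ L = 0, and ker L = span{1_N}. Let each f_i : ℝ → ℝ be twice continuously differentiable with f_i''(s) ≥ l > 0 for all s, let f̃(r) = Σᵢ f_i(r_i), and let α, β > 0. If (r, v) ∈ ℝ^N × ℝ^N is an equilibrium of the system ṙ = −α∇f̃(r) − βLr − Lv, v̇ = αβ L r (i.e., α∇f̃(r) + βLr + Lv = 0 and αβ L r = 0), then r = y*·1_N, where y* is the unique solution of Σᵢ f_i'(y) = 0, i.e., the unique minimizer of Σᵢ f_i over ℝ. -/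
/-!
At an equilibrium `αβ L r = 0`, so `r` lies in `ker L = span{1}`, say `r = c·1`. Summing the
first equilibrium equation over the agents kills both Laplacian terms because `1ᵀL = 0`, leaving
`α Σᵢ fᵢ'(c) = 0`. Since `fᵢ'' ≥ l > 0`, every `fᵢ'` is strictly increasing, hence so is
`Σᵢ fᵢ'`, whose only zero is therefore `y*`; so `c = y*`.
-/

open Matrix

theorem sum_mulVec_eq_zero_of_one_vecMul_eq_zero {ι R : Type*} [Fintype ι] [CommSemiring R]
    {A : Matrix ι ι R} (hA : vecMul 1 A = 0) (v : ι → R) : ∑ i, (A *ᵥ v) i = 0 := by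
  rw [← one_dotProduct, dotProduct_mulVec, hA, zero_dotProduct]

theorem strictMono_deriv_of_iteratedDeriv_two_pos {f : ℝ → ℝ}
    (hpos : ∀ s, 0 < iteratedDeriv 2 f s) : StrictMono (deriv f) :=
  strictMono_of_deriv_pos fun s => by
    simpa only [iteratedDeriv_succ', iteratedDeriv_zero] using hpos s

theorem strictMono_fintype_sum {ι : Type*} [Fintype ι] [Nonempty ι] {g : ι → ℝ → ℝ}
    (hg : ∀ i, StrictMono (g i)) : StrictMono fun y => ∑ i, g i y :=
  fun _ _ hxy => Finset.sum_lt_sum_of_nonempty Finset.univ_nonempty fun i _ => hg i hxy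

theorem stmt2_general (N : ℕ)
    (L : Matrix (Fin N) (Fin N) ℝ)
    (h1L : Matrix.vecMul (fun _ => 1) L = 0)
    (hker : ∀ x : Fin N → ℝ, L.mulVec x = 0 → ∃ c : ℝ, x = fun _ => c)
    (f : Fin N → ℝ → ℝ)
    (l : ℝ) (hl : 0 < l)
    (hdd : ∀ i s, l ≤ iteratedDeriv 2 (f i) s)
    (α β : ℝ) (hα : 0 < α) (hβ : 0 < β)
    (ystar : ℝ) (hystar : ∑ i, deriv (f i) ystar = 0)
    (r v : Fin N → ℝ)
    (heq1 : α • (fun i => deriv (f i) (r i)) + β • L.mulVec r + L.mulVec v = 0)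
    (heq2 : (α * β) • L.mulVec r = 0) :
    r = fun _ => ystar := by
  have hLr : L *ᵥ r = 0 := (smul_eq_zero.mp heq2).resolve_left (by positivity)
  obtain ⟨c, rfl⟩ := hker r hLr
  have hc : ∑ i, deriv (f i) c = 0 := by
    have hsum := congrArg (fun w => ∑ i, w i) heq1
    simp only [Pi.add_apply, Pi.smul_apply, smul_eq_mul, Finset.sum_add_distrib, ← Finset.mul_sum,
      hLr, Pi.zero_apply, mul_zero, sum_mulVec_eq_zero_of_one_vecMul_eq_zero h1L,
      Finset.sum_const_zero, add_zero] at hsum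
    exact (mul_eq_zero.mp hsum).resolve_left hα.ne'
  funext i
  have : Nonempty (Fin N) := ⟨i⟩
  have hmono : StrictMono fun y => ∑ j, deriv (f j) y :=
    strictMono_fintype_sum fun j =>
      strictMono_deriv_of_iteratedDeriv_two_pos fun s => hl.trans_le (hdd j s)
  exact hmono.injective (hc.trans hystar.symm)

/-- any equilibrium `(r, v)` of the optimal signal generator
`ṙ = −α∇f̃(r) − βLr − Lv`, `v̇ = αβLr` satisfies `r = y*·1_N`, where `y*` is the
unique zero of `Σᵢ fᵢ'` (the unique minimizer of `Σᵢ fᵢ`). -/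
theorem stmt2 (N : ℕ) (hN : 2 ≤ N)
    (L : Matrix (Fin N) (Fin N) ℝ)
    (hL1 : L.mulVec (fun _ => 1) = 0)
    (h1L : Matrix.vecMul (fun _ => 1) L = 0)
    (hker : ∀ x : Fin N → ℝ, L.mulVec x = 0 → ∃ c : ℝ, x = fun _ => c)
    (f : Fin N → ℝ → ℝ)
    (hC2 : ∀ i, ContDiff ℝ 2 (f i))
    (l : ℝ) (hl : 0 < l)
    (hdd : ∀ i s, l ≤ iteratedDeriv 2 (f i) s)
    (α β : ℝ) (hα : 0 < α) (hβ : 0 < β)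
    (ystar : ℝ) (hystar : ∑ i, deriv (f i) ystar = 0)
    (r v : Fin N → ℝ)
    (heq1 : α • (fun i => deriv (f i) (r i)) + β • L.mulVec r + L.mulVec v = 0)
    (heq2 : (α * β) • L.mulVec r = 0) :
    r = fun _ => ystar :=
  stmt2_general N L h1L hker f l hl hdd α β hα hβ ystar hystar r v heq1 heq2
end

section
/- Let N ≥ 2 and let L ∈ ℝ^{N×N} satisfy L·1_N = 0 and 1_Nᵀ L = 0, and suppose xᵀ((L+Lᵀ)/2)x ≥ λ₂‖x‖² for every x with 1_Nᵀ x = 0, where λ₂ > 0. Let M₁ = (1/√N)·1_N and M₂ ∈ ℝ^{N×(N−1)} with M₂ᵀ M₁ = 0, M₂ᵀ M₂ = I_{N−1}, M₂ M₂ᵀ = I_N − M₁ M₁ᵀ, and put M_L = M₂ᵀ L M₂. Then: (i) L = M₂ M_L M₂ᵀ; (ii) M_L is invertible; (iii) if each f_i : ℝ → ℝ is twice continuously differentiable with f_i'' ≥ l > 0, y* is the unique minimizer of Σᵢ f_i, f̃(r) = Σᵢ f_i(r_i), r* = y*·1_N, and v* = −α M₂ M_L^{−1} M₂ᵀ ∇f̃(r*)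 for any α, β > 0, then (r*, v*) is an equilibrium of ṙ = −α∇f̃(r) − βLr − Lv, v̇ = αβLr, i.e., α∇f̃(r*) + βLr* + Lv* = 0 and L r* = 0. -/
/-!
Because `L` annihilates `1_N` from both sides, it commutes with the projection
`M₂ M₂ᵀ = I - M₁ M₁ᵀ`, so it is recovered from its compression `M_L = M₂ᵀ L M₂`. The quadratic
form of `M_L` at `v` is that of `L` at `M₂ v`, a nonzero vector orthogonal to `1_N`, hence
positive, so `M_L` is invertible. Finally `L M₂ M_L⁻¹ M₂ᵀ = M₂ M₂ᵀ` fixes `∇f̃(r*)`, which is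
orthogonal to `1_N` by first-order optimality of `y*`; thus `L v* = -α ∇f̃(r*)` while `L r* = 0`.
-/

open Matrix

section

variable {n m R : Type*} [Fintype n] [Fintype m]

theorem eq_mul_mul_transpose_of_mul_transpose_eq_one_sub [DecidableEq n] [CommRing R]
    {L : Matrix n n R} {M : Matrix n m R} {u : n → R}
    (hLu : L *ᵥ u = 0) (huL : u ᵥ* L = 0) (hM : M * Mᵀ = 1 - vecMulVec u u) :
    L = M * (Mᵀ * L * M) * Mᵀ := by
  have hcompress : M * (Mᵀ * L * M) * Mᵀ = (M * Mᵀ) * L * (M * Mᵀ) := by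
    simp only [Matrix.mul_assoc]
  have hPL : vecMulVec u u * L = 0 := by rw [vecMulVec_mul, huL, vecMulVec_zero]
  have hLP : L * vecMulVec u u = 0 := by rw [mul_vecMulVec, hLu, zero_vecMulVec]
  rw [hcompress, hM, Matrix.sub_mul, hPL, Matrix.one_mul, sub_zero, Matrix.mul_sub, hLP,
    Matrix.mul_one, sub_zero]

theorem isUnit_of_dotProduct_mulVec_pos [DecidableEq m] [Field R] [LinearOrder R]
    [IsStrictOrderedRing R]
    {A : Matrix m m R} (hA : ∀ v, v ≠ 0 → 0 < v ⬝ᵥ (A *ᵥ v)) : IsUnit A := by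
  rw [isUnit_iff_isUnit_det, isUnit_iff_ne_zero, Ne, ← exists_mulVec_eq_zero_iff.not]
  rintro ⟨v, hv, hAv⟩
  simpa [hAv] using hA v hv

theorem mulVec_ne_zero_of_transpose_mul_eq_one [DecidableEq m] [CommSemiring R]
    {M : Matrix n m R} (hM : Mᵀ * M = 1) {v : m → R} (hv : v ≠ 0) : M *ᵥ v ≠ 0 := by
  intro h
  apply hv
  rw [← one_mulVec v, ← hM, ← mulVec_mulVec, h, mulVec_zero]

theorem dotProduct_transpose_mul_mul_mulVec [CommSemiring R] (L : Matrix n n R)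
    (M : Matrix n m R) (v : m → R) :
    v ⬝ᵥ ((Mᵀ * L * M) *ᵥ v) = (M *ᵥ v) ⬝ᵥ (L *ᵥ (M *ᵥ v)) := by
  rw [← mulVec_mulVec, ← mulVec_mulVec, dotProduct_mulVec, vecMul_transpose]

theorem dotProduct_half_smul_add_transpose_mulVec [Field R] [CharZero R] (L : Matrix n n R)
    (x : n → R) : x ⬝ᵥ (((1 : R) / 2) • (L + Lᵀ)) *ᵥ x = x ⬝ᵥ (L *ᵥ x) := by
  rw [smul_mulVec, dotProduct_smul, add_mulVec, dotProduct_add, mulVec_transpose,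
    dotProduct_comm x (x ᵥ* L), ← dotProduct_mulVec, smul_eq_mul]
  ring

theorem dotProduct_mulVec_pos_of_coercive {L : Matrix n n ℝ} {lam : ℝ} (hlam : 0 < lam)
    (hquad : ∀ x : n → ℝ, ∑ i, x i = 0 →
      lam * ∑ i, x i ^ 2 ≤ x ⬝ᵥ (((1 : ℝ) / 2) • (L + Lᵀ)) *ᵥ x)
    {x : n → ℝ} (hx : ∑ i, x i = 0) (hx0 : x ≠ 0) : 0 < x ⬝ᵥ (L *ᵥ x) := by
  obtain ⟨i, hxi⟩ := Function.ne_iff.mp hx0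
  have hsq : 0 < ∑ i, x i ^ 2 :=
    Finset.sum_pos' (fun j _ => sq_nonneg (x j)) ⟨i, Finset.mem_univ i, sq_pos_of_ne_zero hxi⟩
  rw [← dotProduct_half_smul_add_transpose_mulVec]
  exact (mul_pos hlam hsq).trans_le (hquad x hx)

theorem mul_mul_nonsing_inv_mul_transpose [DecidableEq m] [CommRing R] {L : Matrix n n R}
    {M : Matrix n m R} {A : Matrix m m R} (hM : Mᵀ * M = 1) (hL : L = M * A * Mᵀ)
    (hA : IsUnit A) : L * M * A⁻¹ * Mᵀ = M * Mᵀ := by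
  have hLM : L * M = M * A := by
    rw [hL, Matrix.mul_assoc, hM, Matrix.mul_one]
  rw [hLM, mul_nonsing_inv_cancel_right _ _ ((isUnit_iff_isUnit_det A).mp hA)]

theorem sum_deriv_eq_zero_of_forall_sum_le {ι : Type*} [Fintype ι] {f : ι → ℝ → ℝ} {y : ℝ}
    (hf : ∀ i, DifferentiableAt ℝ (f i) y) (hy : ∀ z, ∑ i, f i y ≤ ∑ i, f i z) :
    ∑ i, deriv (f i) y = 0 := by
  have hmin : IsLocalMin (fun z => ∑ i, f i z) y := Filter.Eventually.of_forall hy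
  rw [← deriv_fun_sum fun i _ => hf i]
  exact hmin.deriv_eq_zero

end

theorem stmt3_general (N : ℕ) (hN : 2 ≤ N)
    (L : Matrix (Fin N) (Fin N) ℝ)
    (hL1 : L.mulVec (fun _ => 1) = 0)
    (h1L : Matrix.vecMul (fun _ => 1) L = 0)
    (lam2 : ℝ) (hlam2 : 0 < lam2)
    (hquad : ∀ x : Fin N → ℝ, (∑ i, x i) = 0 →
      lam2 * (∑ i, x i ^ 2) ≤ dotProduct x ((((1 : ℝ) / 2) • (L + Lᵀ)).mulVec x))
    (M₁ : Fin N → ℝ) (hM₁ : M₁ = fun _ => 1 / Real.sqrt N)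
    (M₂ : Matrix (Fin N) (Fin (N - 1)) ℝ)
    (hM21 : M₂ᵀ.mulVec M₁ = 0)
    (hM22 : M₂ᵀ * M₂ = 1)
    (hM23 : M₂ * M₂ᵀ = 1 - Matrix.vecMulVec M₁ M₁)
    (f : Fin N → ℝ → ℝ) (hC2 : ∀ i, ContDiff ℝ 2 (f i))
    (ystar : ℝ) (hystar : ∀ y, ∑ i, f i ystar ≤ ∑ i, f i y)
    (α β : ℝ) :
    L = M₂ * (M₂ᵀ * L * M₂) * M₂ᵀ ∧
    IsUnit (M₂ᵀ * L * M₂) ∧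
    (α • (fun i : Fin N => deriv (f i) ystar)
        + β • L.mulVec (fun _ => ystar)
        + L.mulVec (-α • M₂.mulVec ((M₂ᵀ * L * M₂)⁻¹.mulVec
            (M₂ᵀ.mulVec (fun i => deriv (f i) ystar)))) = 0 ∧
      L.mulVec (fun _ => ystar) = 0) := by
  set ML := M₂ᵀ * L * M₂
  have hNpos : (0 : ℝ) < N := by norm_cast; omega
  have hM₁_smul : M₁ = (1 / √(N : ℝ)) • fun _ => 1 := by
    rw [hM₁]; ext; simp
  have hM₁_dot : ∀ x, M₁ ⬝ᵥ x = (1 / √(N : ℝ)) * ∑ i, x i := by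
    intro x; simp [hM₁, dotProduct, Finset.mul_sum]
  have hi : L = M₂ * ML * M₂ᵀ :=
    eq_mul_mul_transpose_of_mul_transpose_eq_one_sub
      (by rw [hM₁_smul, mulVec_smul, hL1, smul_zero])
      (by rw [hM₁_smul, smul_vecMul, h1L, smul_zero]) hM23
  have hii : IsUnit ML := by
    refine isUnit_of_dotProduct_mulVec_pos fun v hv => ?_
    have hM₁_orth : M₁ ⬝ᵥ (M₂ *ᵥ v) = 0 := by
      rw [dotProduct_mulVec, ← mulVec_transpose, hM21, zero_dotProduct]
    rw [hM₁_dot] at hM₁_orth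
    rw [dotProduct_transpose_mul_mul_mulVec]
    exact dotProduct_mulVec_pos_of_coercive hlam2 hquad
      ((mul_eq_zero.mp hM₁_orth).resolve_left (by positivity))
      (mulVec_ne_zero_of_transpose_mul_eq_one hM22 hv)
  set g : Fin N → ℝ := fun i => deriv (f i) ystar
  have hg : ∑ i, g i = 0 := sum_deriv_eq_zero_of_forall_sum_le
    (fun i => ((hC2 i).differentiable (by norm_num)).differentiableAt) hystar
  have hLr : L *ᵥ (fun _ => ystar) = 0 := by
    rw [show (fun _ : Fin N => ystar) = ystar • fun _ => 1 by ext; simp, mulVec_smul, hL1,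
      smul_zero]
  have hLv : L *ᵥ (M₂ *ᵥ (ML⁻¹ *ᵥ (M₂ᵀ *ᵥ g))) = g := by
    rw [mulVec_mulVec, mulVec_mulVec, mulVec_mulVec,
      mul_mul_nonsing_inv_mul_transpose hM22 hi hii, hM23, sub_mulVec, one_mulVec,
      vecMulVec_mulVec, hM₁_dot, hg, mul_zero, MulOpposite.op_zero, zero_smul, sub_zero]
  refine ⟨hi, hii, ?_, hLr⟩
  rw [hLr, smul_zero, add_zero, mulVec_smul, hLv, neg_smul, add_neg_cancel]

/-- properties of `M_L = M₂ᵀ L M₂`: (i) `L = M₂ M_L M₂ᵀ`;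
(ii) `M_L` is invertible; (iii) `(r*, v*)` with `r* = y*·1_N` and
`v* = −α M₂ M_L⁻¹ M₂ᵀ ∇f̃(r*)` is an equilibrium of the optimal signal
generator. -/
theorem stmt3 (N : ℕ) (hN : 2 ≤ N)
    (L : Matrix (Fin N) (Fin N) ℝ)
    (hL1 : L.mulVec (fun _ => 1) = 0)
    (h1L : Matrix.vecMul (fun _ => 1) L = 0)
    (lam2 : ℝ) (hlam2 : 0 < lam2)
    (hquad : ∀ x : Fin N → ℝ, (∑ i, x i) = 0 →
      lam2 * (∑ i, x i ^ 2) ≤ dotProduct x ((((1 : ℝ) / 2) • (L + Lᵀ)).mulVec x))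
    (M₁ : Fin N → ℝ) (hM₁ : M₁ = fun _ => 1 / Real.sqrt N)
    (M₂ : Matrix (Fin N) (Fin (N - 1)) ℝ)
    (hM21 : M₂ᵀ.mulVec M₁ = 0)
    (hM22 : M₂ᵀ * M₂ = 1)
    (hM23 : M₂ * M₂ᵀ = 1 - Matrix.vecMulVec M₁ M₁)
    (f : Fin N → ℝ → ℝ) (hC2 : ∀ i, ContDiff ℝ 2 (f i))
    (l : ℝ) (hl : 0 < l) (hdd : ∀ i s, l ≤ iteratedDeriv 2 (f i) s)
    (ystar : ℝ) (hystar : ∀ y, ∑ i, f i ystar ≤ ∑ i, f i y)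
    (α β : ℝ) (hα : 0 < α) (hβ : 0 < β) :
    L = M₂ * (M₂ᵀ * L * M₂) * M₂ᵀ ∧
    IsUnit (M₂ᵀ * L * M₂) ∧
    (α • (fun i : Fin N => deriv (f i) ystar)
        + β • L.mulVec (fun _ => ystar)
        + L.mulVec (-α • M₂.mulVec ((M₂ᵀ * L * M₂)⁻¹.mulVec
            (M₂ᵀ.mulVec (fun i => deriv (f i) ystar)))) = 0 ∧
      L.mulVec (fun _ => ystar) = 0) :=
  stmt3_general N hN L hL1 h1L lam2 hlam2 hquad M₁ hM₁ M₂ hM21 hM22 hM23 f hC2 ystar hystar α β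
end

section
/- Let 0 < l ≤ l̄ and 0 < λ₂ ≤ λ_N be real numbers, and let α ≥ max{1, 1/l, 2l̄²/(l·λ₂)} and β ≥ max{1, 1/λ₂, 6α²λ_N²/λ₂²}. Then for all real numbers a, b, c ≥ 0: −2αl·a² − 2βλ₂·b² + 2αλ_N·b² + 2λ_N·b·c − (2λ₂/α²)·c² + (2λ_N/α)·b·c + (2l̄/α)·c·a ≤ −(1/2)a² − (λ₂/α²)c². -/
/-!
Substituting `z = c / α` turns the claim into an inequality between quadratic forms in
`(a, b, z)`. Each cross term is absorbed by a weighted Young inequality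
`2kxy ≤ p x² + q y²` (valid once `k² ≤ pq`): the term `2 l̄ z a` by `α l a² + (λ₂/2) z²`, and the
two `b z` terms by `(2/3) β λ₂ b² + (λ₂/4) z²` each. The diagonal term `2 α λ_N b²` costs at most
`(1/3) β λ₂ b²`, and `α l ≥ 1` leaves `a²/2` to spare.
-/

theorem two_mul_mul_le_of_sq_le_mul {K : Type*} [Field K] [LinearOrder K] [IsStrictOrderedRing K]
    {k p q : K} (hp : 0 ≤ p) (hq : 0 ≤ q) (hk : k ^ 2 ≤ p * q) (x y : K) :
    2 * k * x * y ≤ p * x ^ 2 + q * y ^ 2 := by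
  rcases hp.eq_or_lt with rfl | hp
  · have hk0 : k = 0 := by nlinarith [sq_nonneg k]
    subst hk0
    nlinarith [sq_nonneg y]
  · have : 0 ≤ p * (p * x ^ 2 + q * y ^ 2 - 2 * k * x * y) := by
      nlinarith [sq_nonneg (p * x - k * y), mul_nonneg (sub_nonneg.2 hk) (sq_nonneg y)]
    nlinarith [(mul_nonneg_iff_of_pos_left hp).1 this]

theorem lyapunov_quadratic_bound {l lb lam2 lamN α β : ℝ}
    (hlam2 : 0 < lam2) (hlamN : lam2 ≤ lamN) (hα : 1 ≤ α) (hαl : 1 ≤ α * l)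
    (hαlb : 2 * lb ^ 2 ≤ α * l * lam2) (hβ : 6 * α ^ 2 * lamN ^ 2 ≤ β * lam2 ^ 2) (a b z : ℝ) :
    -2 * α * l * a ^ 2 - 2 * β * lam2 * b ^ 2 + 2 * α * lamN * b ^ 2
      + 2 * (α * lamN) * b * z - 2 * lam2 * z ^ 2 + 2 * lamN * b * z + 2 * lb * z * a
    ≤ -(1 / 2) * a ^ 2 - lam2 * z ^ 2 := by
  have hβlam2 : 0 ≤ β * lam2 := by nlinarith [sq_nonneg (α * lamN)]
  have hlamN_sq : lamN ^ 2 ≤ (α * lamN) ^ 2 :=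
    mul_pow α lamN 2 ▸ le_mul_of_one_le_left (sq_nonneg _) (one_le_pow₀ hα)
  have hza := two_mul_mul_le_of_sq_le_mul (k := lb) (p := α * l) (q := lam2 / 2)
    (by linarith) (by linarith) (by nlinarith) a z
  have hbz₁ := two_mul_mul_le_of_sq_le_mul (k := α * lamN) (p := 2 / 3 * (β * lam2))
    (q := lam2 / 4) (by positivity) (by positivity) (by nlinarith) b z
  have hbz₂ := two_mul_mul_le_of_sq_le_mul (k := lamN) (p := 2 / 3 * (β * lam2))
    (q := lam2 / 4) (by positivity) (by positivity) (by nlinarith) b z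
  have hdiag : 6 * α * lamN ≤ β * lam2 := by
    refine le_of_mul_le_mul_right ?_ hlam2
    nlinarith [mul_le_mul_of_nonneg_left (show lam2 ≤ α * lamN by nlinarith)
      (show 0 ≤ 6 * α * lamN by nlinarith)]
  nlinarith [mul_le_mul_of_nonneg_right hdiag (sq_nonneg b),
    mul_le_mul_of_nonneg_right hαl (sq_nonneg a), mul_nonneg hβlam2 (sq_nonneg b)]

theorem stmt6_general (l lb lam2 lamN α β : ℝ)
    (hl : 0 < l) (hlam2 : 0 < lam2) (hlamN : lam2 ≤ lamN)
    (hα : max 1 (max (1 / l) (2 * lb ^ 2 / (l * lam2))) ≤ α)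
    (hβ : max 1 (max (1 / lam2) (6 * α ^ 2 * lamN ^ 2 / lam2 ^ 2)) ≤ β) :
    ∀ a b c : ℝ, 0 ≤ a → 0 ≤ b → 0 ≤ c →
      -2 * α * l * a ^ 2 - 2 * β * lam2 * b ^ 2 + 2 * α * lamN * b ^ 2
        + 2 * lamN * b * c - (2 * lam2 / α ^ 2) * c ^ 2
        + (2 * lamN / α) * b * c + (2 * lb / α) * c * a
      ≤ -(1 / 2) * a ^ 2 - (lam2 / α ^ 2) * c ^ 2 := by
  intro a b c _ _ _
  simp only [max_le_iff] at hα hβ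
  obtain ⟨hα1, hαl, hαlb⟩ := hα
  obtain ⟨-, -, hβα⟩ := hβ
  have hα0 : α ≠ 0 := (zero_lt_one.trans_le hα1).ne'
  rw [div_le_iff₀ hl] at hαl
  rw [div_le_iff₀ (by positivity)] at hαlb hβα
  have key := lyapunov_quadratic_bound (l := l) (lb := lb) hlam2 hlamN hα1 (by linarith)
    (by linarith) hβα a b (c / α)
  convert key using 1 <;> field_simp

/-- the key Young-type inequality chain in the Lyapunov analysis of
the optimal signal generator (Lemma 2). -/
theorem stmt6 (l lb lam2 lamN α β : ℝ)
    (hl : 0 < l) (hllb : l ≤ lb) (hlam2 : 0 < lam2) (hlamN : lam2 ≤ lamN)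
    (hα : max 1 (max (1 / l) (2 * lb ^ 2 / (l * lam2))) ≤ α)
    (hβ : max 1 (max (1 / lam2) (6 * α ^ 2 * lamN ^ 2 / lam2 ^ 2)) ≤ β) :
    ∀ a b c : ℝ, 0 ≤ a → 0 ≤ b → 0 ≤ c →
      -2 * α * l * a ^ 2 - 2 * β * lam2 * b ^ 2 + 2 * α * lamN * b ^ 2
        + 2 * lamN * b * c - (2 * lam2 / α ^ 2) * c ^ 2
        + (2 * lamN / α) * b * c + (2 * lb / α) * c * a
      ≤ -(1 / 2) * a ^ 2 - (lam2 / α ^ 2) * c ^ 2 :=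
  stmt6_general l lb lam2 lamN α β hl hlam2 hlamN hα hβ
end
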